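/- arXiv:1607.01838 — 3 statements merged into one kernel-verified Lean document; each statement's English description precedes it below -/
import Mathlib

section
/- Let H_1,...,H_N and G_1,...,G_N be symmetric M×M matrices with ν I ≤ H_k ≤ δ I (0 < ν ≤ δ) and G_k positive semidefinite, and let q_k > 0, 0 ≤ r < 1. Define Ǧ_k := diag(G_k) − G_k. Then | (r/2)·Tr( (Σ_k q_k H_k)⁻¹ Σ_k q_k² Ǧ_k ) | ≤ (r/2)·(Σ_k q_k)⁻¹·(1/ν − 1/δ)·Σ_k q_k² Tr(G_k). -/
/-!
Put `S = ∑ q_k H_k`, `s = ∑ q_k`, `B₁ = ∑ q_k² diag(G_k)` and `B₂ = ∑ q_k² G_k`; the matrices `B₁`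
and `B₂` are positive semidefinite with the same trace `t = ∑ q_k² Tr G_k`. The Loewner bounds
`(ν s) I ≤ S ≤ (δ s) I` pass to `(δ s)⁻¹ I ≤ S⁻¹ ≤ (ν s)⁻¹ I` through the functional calculus, and
since the trace of a product of positive semidefinite matrices is nonnegative, both `Tr(S⁻¹ B₁)`
and `Tr(S⁻¹ B₂)` lie in `[(δ s)⁻¹ t, (ν s)⁻¹ t]`. Their difference is therefore at most
`((ν s)⁻¹ - (δ s)⁻¹) t` in absolute value.
-/

open Matrix
open scoped MatrixOrder ComplexOrder

namespace Matrix

variable {n 𝕜 : Type*} [Fintype n] [RCLike 𝕜]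

lemma PosSemidef.trace_mul_nonneg {A B : Matrix n n 𝕜} (hA : A.PosSemidef) (hB : B.PosSemidef) :
    0 ≤ (A * B).trace := by
  classical
  obtain ⟨X, rfl⟩ := CStarAlgebra.nonneg_iff_eq_star_mul_self.mp hA.nonneg
  rw [Matrix.mul_assoc, trace_mul_comm, Matrix.mul_assoc, ← Matrix.mul_assoc]
  exact (hB.mul_mul_conjTranspose_same X).trace_nonneg

lemma trace_mul_le_trace_mul_of_le {A A' B : Matrix n n 𝕜} (hA : A ≤ A') (hB : B.PosSemidef) :
    (A * B).trace ≤ (A' * B).trace := by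
  rw [← sub_nonneg, ← trace_sub, ← Matrix.sub_mul]
  exact PosSemidef.trace_mul_nonneg hA hB

variable [DecidableEq n]

lemma inv_mem_Icc_inv_smul_one {S : Matrix n n 𝕜} {a b : ℝ} (ha : 0 < a)
    (hlo : a • 1 ≤ S) (hhi : S ≤ b • 1) : S⁻¹ ∈ Set.Icc (b⁻¹ • 1) (a⁻¹ • 1) := by
  have hS : IsSelfAdjoint S := by
    simpa using (sub_nonneg.mpr hlo).isSelfAdjoint.add
      ((IsSelfAdjoint.all a).smul (IsSelfAdjoint.one _))
  rw [← Algebra.algebraMap_eq_smul_one, algebraMap_le_iff_le_spectrum hS] at hlo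
  rw [← Algebra.algebraMap_eq_smul_one, le_algebraMap_iff_spectrum_le hS] at hhi
  have hpos : ∀ x ∈ spectrum ℝ S, 0 < x := fun x hx => ha.trans_le (hlo x hx)
  have hunit : IsUnit S := by
    by_contra hnot
    exact lt_irrefl 0 (hpos 0 (spectrum.zero_mem ℝ hnot))
  have hcont : ContinuousOn (fun x : ℝ => x⁻¹) (spectrum ℝ S) :=
    continuousOn_inv₀.mono fun x hx => (hpos x hx).ne'
  rw [nonsing_inv_eq_ringInverse, ← cfc_ringInverse_id (R := ℝ) (a := S) hunit,
    ← Algebra.algebraMap_eq_smul_one, ← Algebra.algebraMap_eq_smul_one]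
  exact ⟨algebraMap_le_cfc _ _ _ (fun x hx => inv_anti₀ (hpos x hx) (hhi x hx)) hcont,
    cfc_le_algebraMap _ _ _ (fun x hx => inv_anti₀ ha (hlo x hx)) hcont⟩

lemma trace_inv_mul_mem_Icc {S B : Matrix n n 𝕜} {a b : ℝ} (ha : 0 < a)
    (hlo : a • 1 ≤ S) (hhi : S ≤ b • 1) (hB : B.PosSemidef) :
    (S⁻¹ * B).trace ∈ Set.Icc (b⁻¹ • B.trace) (a⁻¹ • B.trace) := by
  obtain ⟨hinv_lo, hinv_hi⟩ := inv_mem_Icc_inv_smul_one ha hlo hhi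
  have hscalar : ∀ c : ℝ, ((c • 1 : Matrix n n 𝕜) * B).trace = c • B.trace := fun c => by
    rw [Matrix.smul_mul, Matrix.one_mul, trace_smul]
  exact ⟨hscalar b⁻¹ ▸ trace_mul_le_trace_mul_of_le hinv_lo hB,
    hscalar a⁻¹ ▸ trace_mul_le_trace_mul_of_le hinv_hi hB⟩

lemma abs_trace_inv_mul_sub_le {S B₁ B₂ : Matrix n n ℝ} {a b : ℝ} (ha : 0 < a)
    (hlo : a • 1 ≤ S) (hhi : S ≤ b • 1) (hB₁ : B₁.PosSemidef) (hB₂ : B₂.PosSemidef)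
    (htr : B₁.trace = B₂.trace) :
    |(S⁻¹ * (B₁ - B₂)).trace| ≤ (a⁻¹ - b⁻¹) * B₁.trace := by
  obtain ⟨h₁lo, h₁hi⟩ := trace_inv_mul_mem_Icc ha hlo hhi hB₁
  obtain ⟨h₂lo, h₂hi⟩ := trace_inv_mul_mem_Icc ha hlo hhi hB₂
  rw [← htr] at h₂lo h₂hi
  simp only [smul_eq_mul] at h₁lo h₁hi h₂lo h₂hi
  rw [Matrix.mul_sub, trace_sub, abs_le]
  constructor <;> linarith

end Matrix

section OrderedModule

variable {ι E : Type*} [AddCommGroup E] [PartialOrder E] [IsOrderedAddMonoid E] [Module ℝ E]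
  [PosSMulMono ℝ E] (s : Finset ι) {q : ι → ℝ} {c : ℝ} {x : E} {f : ι → E}

lemma smul_le_sum_smul (hq : ∀ i ∈ s, 0 ≤ q i) (hf : ∀ i ∈ s, c • x ≤ f i) :
    (c * ∑ i ∈ s, q i) • x ≤ ∑ i ∈ s, q i • f i := by
  rw [mul_comm, Finset.sum_mul, Finset.sum_smul]
  exact Finset.sum_le_sum fun i hi => mul_smul (q i) c x ▸
    smul_le_smul_of_nonneg_left (hf i hi) (hq i hi)

lemma sum_smul_le_smul (hq : ∀ i ∈ s, 0 ≤ q i) (hf : ∀ i ∈ s, f i ≤ c • x) :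
    ∑ i ∈ s, q i • f i ≤ (c * ∑ i ∈ s, q i) • x := by
  rw [mul_comm, Finset.sum_mul, Finset.sum_smul]
  exact Finset.sum_le_sum fun i hi => mul_smul (q i) c x ▸
    smul_le_smul_of_nonneg_left (hf i hi) (hq i hi)

end OrderedModule

theorem stmt13_general {M N : ℕ} (ν δ : ℝ) (hν : 0 < ν)
    (q : Fin N → ℝ) (hq : ∀ k, 0 < q k)
    (r : ℝ) (hr0 : 0 ≤ r)
    (H G : Fin N → Matrix (Fin M) (Fin M) ℝ)
    (hlow : ∀ k, (H k - ν • (1 : Matrix (Fin M) (Fin M) ℝ)).PosSemidef)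
    (hup : ∀ k, (δ • (1 : Matrix (Fin M) (Fin M) ℝ) - H k).PosSemidef)
    (hG : ∀ k, (G k).PosSemidef) :
    |(r / 2) * ((∑ k, q k • H k)⁻¹ *
        (∑ k, (q k ^ 2) • (Matrix.diagonal (fun i => G k i i) - G k))).trace|
      ≤ (r / 2) * (∑ k, q k)⁻¹ * (1 / ν - 1 / δ) *
          ∑ k, q k ^ 2 * (G k).trace := by
  rcases isEmpty_or_nonempty (Fin N) with _ | _
  · simp
  set s := ∑ k, q k
  set B₁ := ∑ k, q k ^ 2 • diagonal fun i => G k i i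
  set B₂ := ∑ k, q k ^ 2 • G k
  have hs : 0 < s := Finset.sum_pos (fun k _ => hq k) Finset.univ_nonempty
  have hq' : ∀ k ∈ Finset.univ, 0 ≤ q k := fun k _ => (hq k).le
  have hlo : (ν * s) • 1 ≤ ∑ k, q k • H k := smul_le_sum_smul _ hq' fun k _ => hlow k
  have hhi : ∑ k, q k • H k ≤ (δ * s) • 1 := sum_smul_le_smul _ hq' fun k _ => hup k
  have hB₁ : B₁.PosSemidef := posSemidef_sum _ fun k _ =>
    (posSemidef_diagonal_iff.mpr fun _ => (hG k).diag_nonneg).smul (sq_nonneg _)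
  have hB₂ : B₂.PosSemidef := posSemidef_sum _ fun k _ => (hG k).smul (sq_nonneg _)
  have htr₁ : B₁.trace = ∑ k, q k ^ 2 * (G k).trace := by
    simp only [B₁, trace_sum, trace_smul, trace_diagonal, smul_eq_mul]
    rfl
  have htr₂ : B₂.trace = ∑ k, q k ^ 2 * (G k).trace := by
    simp only [B₂, trace_sum, trace_smul, smul_eq_mul]
  have key := abs_trace_inv_mul_sub_le (mul_pos hν hs) hlo hhi hB₁ hB₂ (htr₁.trans htr₂.symm)
  simp only [smul_sub, Finset.sum_sub_distrib]
  rw [abs_mul, abs_of_nonneg (by positivity), ← htr₁]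
  calc _ ≤ r / 2 * (((ν * s)⁻¹ - (δ * s)⁻¹) * B₁.trace) := by gcongr
    _ = _ := by field_simp

/-- With symmetric H_k satisfying ν I ≤ H_k ≤ δ I (0 < ν ≤ δ),
G_k positive semidefinite, q_k > 0 and 0 ≤ r < 1, and Ǧ_k := diag(G_k) − G_k,
| (r/2)·Tr( (Σ_k q_k H_k)⁻¹ Σ_k q_k² Ǧ_k ) |
  ≤ (r/2)·(Σ_k q_k)⁻¹·(1/ν − 1/δ)·Σ_k q_k² Tr(G_k). -/
theorem stmt13 {M N : ℕ} (ν δ : ℝ) (hν : 0 < ν) (hνδ : ν ≤ δ)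
    (q : Fin N → ℝ) (hq : ∀ k, 0 < q k)
    (r : ℝ) (hr0 : 0 ≤ r) (hr1 : r < 1)
    (H G : Fin N → Matrix (Fin M) (Fin M) ℝ)
    (hH : ∀ k, (H k).IsHermitian)
    (hlow : ∀ k, (H k - ν • (1 : Matrix (Fin M) (Fin M) ℝ)).PosSemidef)
    (hup : ∀ k, (δ • (1 : Matrix (Fin M) (Fin M) ℝ) - H k).PosSemidef)
    (hG : ∀ k, (G k).PosSemidef) :
    |(r / 2) * ((∑ k, q k • H k)⁻¹ *
        (∑ k, (q k ^ 2) • (Matrix.diagonal (fun i => G k i i) - G k))).trace|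
      ≤ (r / 2) * (∑ k, q k)⁻¹ * (1 / ν - 1 / δ) *
          ∑ k, q k ^ 2 * (G k).trace :=
  stmt13_general ν δ hν q hq r hr0 H G hlow hup hG
end

section
/- (Two-agent MSE network MSD gap.) Let R_1 = [[|π_1|, π_1],[π_1, 1]] and R_2 = [[|π_2|, π_2],[π_2, 1]] with |π_1| < 1, |π_2| < 1, let σ_1², σ_2² > 0, q > 0, 0 ≤ r < 1. Then r·q·Tr( (R_1+R_2)⁻¹ ( σ_1²(diag(R_1) − R_1) + σ_2²(diag(R_2) − R_2) ) ) = 2 r q (π_1+π_2)(π_1 σ_1² + π_2 σ_2²) / ( 2(|π_1|+|π_2|) − (π_1+π_2)² ), and the denominator 2(|π_1|+|π_2|) − (π_1+π_2)² is strictly positive whenever (π₁,π₂) ≠ (0,0). -/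
open Matrix

/-!
Both $R_1 + R_2$ and the weighted sum of the $\operatorname{diag}(R_i) - R_i$ are explicit
$2\times 2$ matrices, the latter with zero diagonal, so the trace is read off the adjugate
formula for the inverse. Positivity of the determinant: with $s = |\pi_1| + |\pi_2| \in (0, 2)$
we have $(\pi_1 + \pi_2)^2 \le s^2 < 2s$.
-/

theorem diagonal_diag_sub_fin_two {α : Type*} [AddGroup α] (a b c d : α) :
    diagonal (fun i => !![a, b; c, d] i i) - !![a, b; c, d] = !![0, -b; -c, 0] := by
  ext i j
  fin_cases i <;> fin_cases j <;> simp

/-- Also valid for singular matrices, where both `⁻¹` and `/` return `0`. -/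
theorem trace_inv_mul_of_zero_diag {K : Type*} [Field K] (a b d c : K) :
    ((!![a, b; b, d])⁻¹ * !![0, c; c, 0]).trace = -2 * b * c / (a * d - b * b) := by
  rw [inv_def, adjugate_fin_two_of, det_fin_two_of, Ring.inverse_eq_inv', smul_mul,
    trace_smul, mul_fin_two, trace_fin_two_of, smul_eq_mul]
  ring

theorem sq_add_lt_two_mul_abs_add_abs {x y : ℝ} (hxy : (x, y) ≠ (0, 0))
    (h : |x| + |y| < 2) : (x + y) ^ 2 < 2 * (|x| + |y|) := by
  have hpos : 0 < |x| + |y| := by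
    by_contra! hle
    exact hxy (Prod.ext (abs_nonpos_iff.mp (by linarith [abs_nonneg y]))
      (abs_nonpos_iff.mp (by linarith [abs_nonneg x])))
  calc (x + y) ^ 2 = |x + y| ^ 2 := (sq_abs _).symm
    _ ≤ (|x| + |y|) ^ 2 := pow_le_pow_left₀ (abs_nonneg _) (abs_add_le x y) 2
    _ < 2 * (|x| + |y|) := by nlinarith

theorem stmt15_general (π₁ π₂ s₁ s₂ q r : ℝ)
    (hπ₁ : |π₁| < 1) (hπ₂ : |π₂| < 1)
    (R₁ R₂ : Matrix (Fin 2) (Fin 2) ℝ)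
    (hR₁ : R₁ = !![|π₁|, π₁; π₁, 1]) (hR₂ : R₂ = !![|π₂|, π₂; π₂, 1]) :
    r * q * ((R₁ + R₂)⁻¹ *
        (s₁ • (Matrix.diagonal (fun i => R₁ i i) - R₁) +
         s₂ • (Matrix.diagonal (fun i => R₂ i i) - R₂))).trace
      = 2 * r * q * (π₁ + π₂) * (π₁ * s₁ + π₂ * s₂) /
          (2 * (|π₁| + |π₂|) - (π₁ + π₂) ^ 2) ∧
    ((π₁, π₂) ≠ (0, 0) → 0 < 2 * (|π₁| + |π₂|) - (π₁ + π₂) ^ 2) := by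
  subst hR₁ hR₂
  refine ⟨?_, fun hπ => sub_pos.mpr (sq_add_lt_two_mul_abs_add_abs hπ (by linarith))⟩
  have hsum : !![|π₁|, π₁; π₁, 1] + !![|π₂|, π₂; π₂, 1]
      = !![|π₁| + |π₂|, π₁ + π₂; π₁ + π₂, (2 : ℝ)] := by
    ext i j
    fin_cases i <;> fin_cases j <;> norm_num
  have hweighted : s₁ • !![0, -π₁; -π₁, (0 : ℝ)] + s₂ • !![0, -π₂; -π₂, 0]
      = !![0, -(π₁ * s₁ + π₂ * s₂); -(π₁ * s₁ + π₂ * s₂), 0] := by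
    ext i j
    fin_cases i <;> fin_cases j <;> simp <;> ring
  rw [diagonal_diag_sub_fin_two, diagonal_diag_sub_fin_two, hsum, hweighted,
    trace_inv_mul_of_zero_diag]
  ring

/-- two-agent MSE network MSD gap: with R_1 = [[|π₁|, π₁],[π₁, 1]],
R_2 = [[|π₂|, π₂],[π₂, 1]], |π₁| < 1, |π₂| < 1, σ₁², σ₂² > 0, q > 0, 0 ≤ r < 1,
r·q·Tr( (R₁+R₂)⁻¹ ( σ₁²(diag(R₁) − R₁) + σ₂²(diag(R₂) − R₂) ) )
  = 2 r q (π₁+π₂)(π₁σ₁² + π₂σ₂²) / ( 2(|π₁|+|π₂|) − (π₁+π₂)² ),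
and the denominator is strictly positive whenever (π₁,π₂) ≠ (0,0). -/
theorem stmt15 (π₁ π₂ s₁ s₂ q r : ℝ)
    (hπ₁ : |π₁| < 1) (hπ₂ : |π₂| < 1)
    (hs₁ : 0 < s₁) (hs₂ : 0 < s₂) (hq : 0 < q) (hr0 : 0 ≤ r) (hr1 : r < 1)
    (R₁ R₂ : Matrix (Fin 2) (Fin 2) ℝ)
    (hR₁ : R₁ = !![|π₁|, π₁; π₁, 1]) (hR₂ : R₂ = !![|π₂|, π₂; π₂, 1]) :
    r * q * ((R₁ + R₂)⁻¹ *
        (s₁ • (Matrix.diagonal (fun i => R₁ i i) - R₁) +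
         s₂ • (Matrix.diagonal (fun i => R₂ i i) - R₂))).trace
      = 2 * r * q * (π₁ + π₂) * (π₁ * s₁ + π₂ * s₂) /
          (2 * (|π₁| + |π₂|) - (π₁ + π₂) ^ 2) ∧
    ((π₁, π₂) ≠ (0, 0) → 0 < 2 * (|π₁| + |π₂|) - (π₁ + π₂) ^ 2) :=
  stmt15_general π₁ π₂ s₁ s₂ q r hπ₁ hπ₂ R₁ R₂ hR₁ hR₂
end

section
/- Let H, G be symmetric M×M matrices with ν I ≤ H ≤ δ I (0 < ν ≤ δ) and G positive semidefinite, and let α, θ be real numbers with θ ≥ α. Define Δ := (α/2)·Tr(H⁻¹G) + ((θ−α)/2)·Tr(H⁻¹ diag(G)). If α ≥ 0 then 0 ≤ Δ ≤ (θ/(2ν))·Tr(G). If α < 0 and θ ≥ (1 − δ/ν)α then 0 ≤ Δ ≤ (1/2)(θ/ν + (1/δ − 1/ν)α)·Tr(G). If α < 0 and θ ≤ (1 − ν/δ)α then (1/2)(θ/δ + (1/ν − 1/δ)α)·Tr(G) ≤ Δ ≤ 0. -/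
open Matrix
open scoped MatrixOrder

section Aux

variable {n : ℕ}

lemma aux_psd_smul {A : Matrix (Fin n) (Fin n) ℝ} (hA : A.PosSemidef) {c : ℝ} (hc : 0 ≤ c) :
    (c • A).PosSemidef := by
  refine ⟨?_, fun x => ?_⟩
  · unfold Matrix.IsHermitian
    rw [conjTranspose_smul, hA.1.eq]
    simp
  · exact (hA.smul hc).2 x

lemma aux_diag_nonneg {A : Matrix (Fin n) (Fin n) ℝ} (hA : A.PosSemidef) (i : Fin n) :
    0 ≤ A i i := by
  exact hA.diag_nonneg

lemma aux_trace_nonneg {A : Matrix (Fin n) (Fin n) ℝ} (hA : A.PosSemidef) :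
    0 ≤ A.trace := by
  rw [Matrix.trace]
  exact Finset.sum_nonneg fun i _ => aux_diag_nonneg hA i

lemma aux_trace_mul_nonneg {A B : Matrix (Fin n) (Fin n) ℝ}
    (hA : A.PosSemidef) (hB : B.PosSemidef) : 0 ≤ (A * B).trace := by
  have h1 : (CFC.sqrt A * B * (CFC.sqrt A)ᴴ).PosSemidef := hB.mul_mul_conjTranspose_same _
  have e : A * B = CFC.sqrt A * (CFC.sqrt A * B) := by
    rw [← Matrix.mul_assoc, CFC.sqrt_mul_sqrt_self A hA.nonneg]
  have h2 : (A * B).trace = (CFC.sqrt A * B * (CFC.sqrt A)ᴴ).trace := by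
    rw [(CFC.sqrt_nonneg A).posSemidef.1.eq, e, Matrix.trace_mul_comm]
  rw [h2]
  exact aux_trace_nonneg h1

lemma aux_trace_le {A B : Matrix (Fin n) (Fin n) ℝ} (hB : B.PosSemidef) {c : ℝ}
    (h : (c • (1 : Matrix (Fin n) (Fin n) ℝ) - A).PosSemidef) :
    (A * B).trace ≤ c * B.trace := by
  have h0 := aux_trace_mul_nonneg h hB
  rw [Matrix.sub_mul, trace_sub, Matrix.smul_mul, one_mul, trace_smul, smul_eq_mul] at h0
  linarith

lemma aux_trace_ge {A B : Matrix (Fin n) (Fin n) ℝ} (hB : B.PosSemidef) {c : ℝ}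
    (h : (A - c • (1 : Matrix (Fin n) (Fin n) ℝ)).PosSemidef) :
    c * B.trace ≤ (A * B).trace := by
  have h0 := aux_trace_mul_nonneg h hB
  rw [Matrix.sub_mul, trace_sub, Matrix.smul_mul, one_mul, trace_smul, smul_eq_mul] at h0
  linarith

end Aux

set_option maxHeartbeats 1000000 in
/-- For symmetric H, G with ν I ≤ H ≤ δ I (0 < ν ≤ δ), G positive
semidefinite, and reals θ ≥ α, define
Δ := (α/2)·Tr(H⁻¹G) + ((θ−α)/2)·Tr(H⁻¹ diag(G)). Then:
if α ≥ 0 then 0 ≤ Δ ≤ (θ/(2ν))·Tr(G);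
if α < 0 and θ ≥ (1 − δ/ν)α then 0 ≤ Δ ≤ (1/2)(θ/ν + (1/δ − 1/ν)α)·Tr(G);
if α < 0 and θ ≤ (1 − ν/δ)α then (1/2)(θ/δ + (1/ν − 1/δ)α)·Tr(G) ≤ Δ ≤ 0. -/
theorem stmt19 {M : ℕ} (ν δ : ℝ) (hν : 0 < ν) (hνδ : ν ≤ δ)
    (H G : Matrix (Fin M) (Fin M) ℝ)
    (hH : H.IsHermitian)
    (hlow : (H - ν • (1 : Matrix (Fin M) (Fin M) ℝ)).PosSemidef)
    (hup : (δ • (1 : Matrix (Fin M) (Fin M) ℝ) - H).PosSemidef)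
    (hG : G.PosSemidef)
    (α θ : ℝ) (hαθ : α ≤ θ)
    (Δ : ℝ)
    (hΔ : Δ = (α / 2) * (H⁻¹ * G).trace +
              ((θ - α) / 2) * (H⁻¹ * Matrix.diagonal (fun i => G i i)).trace) :
    (0 ≤ α → 0 ≤ Δ ∧ Δ ≤ (θ / (2 * ν)) * G.trace) ∧
    (α < 0 → (1 - δ / ν) * α ≤ θ →
      0 ≤ Δ ∧ Δ ≤ (1 / 2) * (θ / ν + (1 / δ - 1 / ν) * α) * G.trace) ∧
    (α < 0 → θ ≤ (1 - ν / δ) * α →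
      (1 / 2) * (θ / δ + (1 / ν - 1 / δ) * α) * G.trace ≤ Δ ∧ Δ ≤ 0) := by
  have hδpos : 0 < δ := lt_of_lt_of_le hν hνδ
  -- H is positive definite
  have hνI : (ν • (1 : Matrix (Fin M) (Fin M) ℝ)).PosDef := by
    rw [Matrix.smul_one_eq_diagonal]
    exact Matrix.PosDef.diagonal fun i => hν
  have hHpd : H.PosDef := by
    have := Matrix.PosDef.posSemidef_add hlow hνI
    simpa using this
  have hSpd : (H⁻¹).PosDef := hHpd.inv
  set R := CFC.sqrt (H⁻¹) with hRdef
  have hRpsd : R.PosSemidef := (CFC.sqrt_nonneg (H⁻¹)).posSemidef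
  have hRR : R * R = H⁻¹ := CFC.sqrt_mul_sqrt_self (H⁻¹) hSpd.posSemidef.nonneg
  have hRdet : IsUnit R.det := by
    have hdet : R.det * R.det = (H⁻¹).det := by rw [← det_mul, hRR]
    have : (H⁻¹).det ≠ 0 := hSpd.det_pos.ne'
    have hRne : R.det ≠ 0 := by
      intro h0
      rw [h0, mul_zero] at hdet
      exact this hdet.symm
    exact hRne.isUnit
  have hHinv : (H⁻¹)⁻¹ = H :=
    Matrix.nonsing_inv_nonsing_inv H ((Matrix.isUnit_iff_isUnit_det H).1 hHpd.isUnit)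
  have hRHR : R * H * R = 1 := by
    have hH' : H = R⁻¹ * R⁻¹ := by
      rw [← Matrix.mul_inv_rev, hRR, hHinv]
    rw [hH', ← Matrix.mul_assoc, Matrix.mul_assoc (R * R⁻¹), Matrix.mul_nonsing_inv R hRdet,
      Matrix.nonsing_inv_mul R hRdet, one_mul]
  -- the sandwiched bounds on H⁻¹
  have key1 : ((1/ν) • (1 : Matrix (Fin M) (Fin M) ℝ) - H⁻¹).PosSemidef := by
    have hX : ((1/ν) • H - 1).PosSemidef := by
      have e : (1/ν) • H - (1 : Matrix (Fin M) (Fin M) ℝ) =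
          (1/ν) • (H - ν • (1 : Matrix (Fin M) (Fin M) ℝ)) := by
        rw [smul_sub, smul_smul, one_div, inv_mul_cancel₀ hν.ne', one_smul]
      rw [e]
      exact aux_psd_smul hlow (by positivity)
    have h2 := hX.mul_mul_conjTranspose_same R
    have e2 : R * ((1/ν) • H - 1) * Rᴴ =
        (1/ν) • (1 : Matrix (Fin M) (Fin M) ℝ) - H⁻¹ := by
      rw [hRpsd.1.eq, Matrix.mul_sub, Matrix.sub_mul, Matrix.mul_smul, Matrix.smul_mul,
        hRHR, mul_one, hRR]
    rwa [e2] at h2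
  have key2 : (H⁻¹ - (1/δ) • (1 : Matrix (Fin M) (Fin M) ℝ)).PosSemidef := by
    have hX : ((1 : Matrix (Fin M) (Fin M) ℝ) - (1/δ) • H).PosSemidef := by
      have e : (1 : Matrix (Fin M) (Fin M) ℝ) - (1/δ) • H =
          (1/δ) • (δ • (1 : Matrix (Fin M) (Fin M) ℝ) - H) := by
        rw [smul_sub, smul_smul, one_div, inv_mul_cancel₀ hδpos.ne', one_smul]
      rw [e]
      exact aux_psd_smul hup (by positivity)
    have h2 := hX.mul_mul_conjTranspose_same R
    have e2 : R * ((1 : Matrix (Fin M) (Fin M) ℝ) - (1/δ) • H) * Rᴴ =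
        H⁻¹ - (1/δ) • (1 : Matrix (Fin M) (Fin M) ℝ) := by
      rw [hRpsd.1.eq, Matrix.mul_sub, Matrix.sub_mul, Matrix.mul_smul, Matrix.smul_mul,
        hRHR, mul_one, hRR]
    rwa [e2] at h2
  -- trace quantities
  set D : Matrix (Fin M) (Fin M) ℝ := Matrix.diagonal (fun i => G i i) with hDdef
  have hDpsd : D.PosSemidef := Matrix.PosSemidef.diagonal fun i => aux_diag_nonneg hG i
  have hDtr : D.trace = G.trace := by
    rw [hDdef, Matrix.trace_diagonal, Matrix.trace]
    rfl
  set g := G.trace with hgdef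
  set t1 := (H⁻¹ * G).trace with ht1def
  set t2 := (H⁻¹ * D).trace with ht2def
  have hg0 : 0 ≤ g := aux_trace_nonneg hG
  have ht1u : ν * t1 ≤ g := by
    have h := aux_trace_le hG key1
    calc ν * t1 ≤ ν * ((1/ν) * g) := mul_le_mul_of_nonneg_left h hν.le
      _ = g := by field_simp
  have ht1l : g ≤ δ * t1 := by
    have h := aux_trace_ge hG key2
    calc g = δ * ((1/δ) * g) := by field_simp
      _ ≤ δ * t1 := mul_le_mul_of_nonneg_left h hδpos.le
  have ht2u : ν * t2 ≤ g := by
    have h := aux_trace_le hDpsd key1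
    rw [hDtr] at h
    calc ν * t2 ≤ ν * ((1/ν) * g) := mul_le_mul_of_nonneg_left h hν.le
      _ = g := by field_simp
  have ht2l : g ≤ δ * t2 := by
    have h := aux_trace_ge hDpsd key2
    rw [hDtr] at h
    calc g = δ * ((1/δ) * g) := by field_simp
      _ ≤ δ * t2 := mul_le_mul_of_nonneg_left h hδpos.le
  have ht1nn : 0 ≤ t1 := by nlinarith
  have ht2nn : 0 ≤ t2 := by nlinarith
  have hθα : 0 ≤ θ - α := by linarith
  refine ⟨fun hα => ⟨?_, ?_⟩, fun hα hc => ⟨?_, ?_⟩, fun hα hc => ⟨?_, ?_⟩⟩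
  · -- case α ≥ 0, lower
    rw [hΔ]
    have := mul_nonneg hα ht1nn
    have := mul_nonneg hθα ht2nn
    nlinarith
  · -- case α ≥ 0, upper
    have hr : (θ / (2 * ν)) * g = (θ * g) / (2 * ν) := by ring
    rw [hΔ, hr, le_div_iff₀ (by positivity)]
    nlinarith [mul_nonneg hα (sub_nonneg.2 ht1u), mul_nonneg hθα (sub_nonneg.2 ht2u)]
  · -- case α < 0, θ ≥ (1 - δ/ν)α, lower
    have hc' : (ν - δ) * α ≤ ν * θ := by
      have e : ν * ((1 - δ / ν) * α) = (ν - δ) * α := by field_simp <;> ring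
      nlinarith [mul_le_mul_of_nonneg_left hc hν.le]
    rw [hΔ]
    nlinarith [mul_nonneg (mul_nonneg hδpos.le (neg_nonneg.2 hα.le)) (sub_nonneg.2 ht1u),
      mul_nonneg (mul_nonneg hν.le hθα) (sub_nonneg.2 ht1l),
      mul_nonneg (mul_nonneg hν.le hθα) (sub_nonneg.2 ht2l),
      mul_nonneg hg0 (by linarith : (0:ℝ) ≤ ν * θ + (δ - ν) * α),
      mul_pos hν hδpos]
  · -- case α < 0, θ ≥ (1 - δ/ν)α, upper
    have hr : (1 / 2) * (θ / ν + (1 / δ - 1 / ν) * α) * g =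
        ((δ * θ + (ν - δ) * α) * g) / (2 * ν * δ) := by
      field_simp
      <;> ring
    rw [hΔ, hr, le_div_iff₀ (by positivity)]
    nlinarith [mul_nonneg (mul_nonneg hν.le (neg_nonneg.2 hα.le)) (sub_nonneg.2 ht1l),
      mul_nonneg (mul_nonneg hδpos.le hθα) (sub_nonneg.2 ht2u)]
  · -- case α < 0, θ ≤ (1 - ν/δ)α, lower
    have hr : (1 / 2) * (θ / δ + (1 / ν - 1 / δ) * α) * g =
        ((ν * θ + (δ - ν) * α) * g) / (2 * ν * δ) := by
      field_simp
      <;> ring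
    rw [hΔ, hr, div_le_iff₀ (by positivity)]
    nlinarith [mul_nonneg (mul_nonneg hδpos.le (neg_nonneg.2 hα.le)) (sub_nonneg.2 ht1u),
      mul_nonneg (mul_nonneg hν.le hθα) (sub_nonneg.2 ht2l)]
  · -- case α < 0, θ ≤ (1 - ν/δ)α, upper
    have hc' : δ * θ ≤ (δ - ν) * α := by
      have e : δ * ((1 - ν / δ) * α) = (δ - ν) * α := by field_simp <;> ring
      nlinarith [mul_le_mul_of_nonneg_left hc hδpos.le]
    rw [hΔ]
    nlinarith [mul_nonneg (mul_nonneg hν.le (neg_nonneg.2 hα.le)) (sub_nonneg.2 ht1l),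
      mul_nonneg (mul_nonneg hδpos.le hθα) (sub_nonneg.2 ht2u),
      mul_nonneg hg0 (by linarith : (0:ℝ) ≤ (δ - ν) * α - δ * θ),
      mul_pos hν hδpos]
end
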